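/- For every function f : ω → ω, the statement 'a ⊆* L_f' for a ⊆ ω×ω is characterized by: if g : dom → ω is a function with graph contained in a, where dom = {m : ∃n (m,n) ∈ a}, and a ∩ L_f is finite, then g(n) > f(n) for all but finitely many n ∈ dom. Consequently, the countably co-generated nonprincipal ideals of P(ω)/fin are, up to isomorphism, exactly the ideals of P(ω×ω)/fin generated by the sets L_f = {(m,n) : n ≤ f(m)} for f ∈ ω^ω, and 𝔡 equals the minimum cardinality of a cofinal subset of any such ideal. -/

import Mathlib

/-!
`X ⊆* L_f` for some `f` exactly when every column of `X` is finite, so the ideal generated by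
the `L_f` is co-generated by the columns, and `[L_{f+1}] ≰ [L_f]` shows it is not principal.
Conversely, a countable co-generating family of a nonprincipal ideal of `P(ω)/fin` can be made
disjoint, its finite members discarded and the points it misses spread one per member, without
changing the ideal; a bijection `ω ≃ ω × ω` carrying the resulting pieces onto the columns then
transports the ideal onto the `L_f`-ideal. Finally `[L_f] ≤ [L_g]` iff `f ≤* g`, so cofinal
subsets of the `L_f`-ideal and dominating families correspond, and `𝔡` is its cofinality.
-/

open scoped symmDiff

instance booleanRingQuotient {R : Type*} [BooleanRing R] (I : Ideal R) :
    BooleanRing (R ⧸ I) where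
  isIdempotentElem a := by
    obtain ⟨x, rfl⟩ := Ideal.Quotient.mk_surjective a
    show _ * _ = _
    rw [← map_mul]; exact congrArg _ (BooleanRing.mul_self x)

/-- The ideal of finite sets, as a ring ideal of the Boolean ring `AsBoolRing (Set α)`. -/
def finSetIdeal (α : Type*) : Ideal (AsBoolRing (Set α)) where
  carrier := {s | (ofBoolRing s).Finite}
  zero_mem' := by simp [ofBoolRing_zero]
  add_mem' := by
    intro a b ha hb
    have h : (ofBoolRing (a + b) : Set α) = ofBoolRing a ∆ ofBoolRing b := ofBoolRing_add a b
    show (ofBoolRing (a + b)).Finite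
    rw [h]
    refine Set.Finite.subset (Set.Finite.union ha hb) ?_
    rintro x (h1 | h1)
    · exact Or.inl h1.1
    · exact Or.inr h1.1
  smul_mem' := by
    intro c x hx
    have h : (ofBoolRing (c * x) : Set α) = ofBoolRing c ⊓ ofBoolRing x := ofBoolRing_mul c x
    show (ofBoolRing (c • x)).Finite
    rw [smul_eq_mul, h]
    exact Set.Finite.subset hx Set.inter_subset_right

/-- The Boolean algebra `P(α)/fin`. -/
abbrev PowFin (α : Type*) : Type _ := AsBoolAlg ((AsBoolRing (Set α)) ⧸ finSetIdeal α)

/-- The ideal co-generated by `S`: all elements disjoint from every member of `S`. -/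
def cogenSet {B : Type*} [BooleanAlgebra B] (S : Set B) : Set B :=
  {b | ∀ s ∈ S, b ⊓ s = ⊥}

/-- `I` is a countably co-generated ideal: it is co-generated by some countable set,
but by no finite set. -/
def CtblyCogen {B : Type*} [BooleanAlgebra B] (I : Set B) : Prop :=
  (∃ S : Set B, S.Countable ∧ I = cogenSet S) ∧ ¬ ∃ F : Finset B, I = cogenSet ↑F

/-- The dominating number `𝔡`: the least cardinality of a family of functions that
eventually dominates every function `ℕ → ℕ`. -/
noncomputable def dNum : Cardinal :=
  sInf {κ | ∃ D : Set (ℕ → ℕ), Cardinal.mk D = κ ∧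
    ∀ g : ℕ → ℕ, ∃ d ∈ D, ∀ᶠ n in Filter.atTop, g n < d n}

/-- Van Douwen's cardinal `𝔡₂`: the minimum of `|A| + |D|` over pairs with
`A ⊆ [ω]^ω`, `D ⊆ ω^ω`, such that `D` dominates on `A`. -/
noncomputable def d2Num : Cardinal :=
  sInf {κ | ∃ (A : Set (Set ℕ)) (D : Set (ℕ → ℕ)), (∀ a ∈ A, a.Infinite) ∧
    Cardinal.mk A + Cardinal.mk D = κ ∧
    ∀ g : ℕ → ℕ, ∃ d ∈ D, ∃ a ∈ A, ∀ n ∈ a, g n < d n}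

/-- The equivalence class of `s ⊆ α` in `P(α)/fin`. -/
def clsFin {α : Type*} (s : Set α) : PowFin α :=
  toBoolAlg (Ideal.Quotient.mk (finSetIdeal α) (toBoolRing s))

/-- `L_f = {(m,n) : n ≤ f(m)}`, the region below the graph of `f`. -/
def Lf (f : ℕ → ℕ) : Set (ℕ × ℕ) := {p | p.2 ≤ f p.1}

/-- The ideal of `P(ω×ω)/fin` generated by the sets `L_f`, `f ∈ ω^ω`. -/
def LIdeal : Set (PowFin (ℕ × ℕ)) := {x | ∃ f : ℕ → ℕ, x ≤ clsFin (Lf f)}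

open Set Filter Cardinal Function

section PowFin

variable {α β : Type*}

lemma clsFin_surjective : Surjective (clsFin (α := α)) := by
  intro x
  obtain ⟨y, hy⟩ := Ideal.Quotient.mk_surjective (ofBoolAlg x)
  exact ⟨ofBoolRing y, by simp [clsFin, hy]⟩

lemma clsFin_inter (s t : Set α) : clsFin (s ∩ t) = clsFin s ⊓ clsFin t := by
  rw [clsFin, clsFin, clsFin, ← toBoolAlg_mul, ← map_mul]
  rfl

lemma clsFin_eq_clsFin_iff (s t : Set α) : clsFin s = clsFin t ↔ (s ∆ t).Finite := by
  rw [clsFin, clsFin, toBoolAlg_inj, Ideal.Quotient.eq, BooleanRing.sub_eq_add,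
    ← toBoolRing_symmDiff]
  rfl

lemma clsFin_eq_bot_iff (s : Set α) : clsFin s = ⊥ ↔ s.Finite := by
  rw [clsFin, ← toBoolAlg_zero, toBoolAlg_inj, Ideal.Quotient.eq_zero_iff_mem]
  rfl

lemma clsFin_le_clsFin_iff (s t : Set α) : clsFin s ≤ clsFin t ↔ (s \ t).Finite := by
  rw [← inf_eq_left, ← clsFin_inter, clsFin_eq_clsFin_iff, symmDiff_comm,
    symmDiff_of_ge inter_subset_left, sdiff_self_inter]

lemma clsFin_mem_cogenSet_image_iff {ι : Type*} (A : ι → Set α) (s : Set ι) (X : Set α) :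
    clsFin X ∈ cogenSet ((fun i ↦ clsFin (A i)) '' s) ↔ ∀ i ∈ s, (X ∩ A i).Finite := by
  simp only [cogenSet, mem_ofPred_eq, forall_mem_image, ← clsFin_inter, clsFin_eq_bot_iff]

lemma clsFin_mem_cogenSet_range_iff {ι : Type*} (A : ι → Set α) (X : Set α) :
    clsFin X ∈ cogenSet (range fun i ↦ clsFin (A i)) ↔ ∀ i, (X ∩ A i).Finite := by
  simpa [← image_univ] using clsFin_mem_cogenSet_image_iff A univ X

def setRingEquiv (e : α ≃ β) : AsBoolRing (Set α) ≃+* AsBoolRing (Set β) where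
  toEquiv := ofBoolRing.trans ((Equiv.Set.congr e).trans toBoolRing)
  map_mul' _ _ := congrArg toBoolRing (image_inter e.injective)
  map_add' _ _ := congrArg toBoolRing (image_symmDiff e.injective _ _)

lemma map_finSetIdeal (e : α ≃ β) :
    (finSetIdeal α).map (setRingEquiv e : AsBoolRing (Set α) →+* AsBoolRing (Set β)) =
      finSetIdeal β := by
  rw [Ideal.map_comap_of_equiv]
  ext x
  exact finite_image_iff e.symm.injective.injOn

def RingEquiv.asBoolAlgOrderIso {R S : Type*} [BooleanRing R] [BooleanRing S] (e : R ≃+* S) :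
    AsBoolAlg R ≃o AsBoolAlg S where
  toEquiv := ofBoolAlg.trans (e.toEquiv.trans toBoolAlg)
  map_rel_iff' {a b} := by
    rw [← ofBoolAlg_mul_ofBoolAlg_eq_left_iff, ← ofBoolAlg_mul_ofBoolAlg_eq_left_iff]
    simp [← map_mul, e.injective.eq_iff]

noncomputable def powFinOrderIso (e : α ≃ β) : PowFin α ≃o PowFin β :=
  (Ideal.quotientEquiv _ _ (setRingEquiv e) (map_finSetIdeal e).symm).asBoolAlgOrderIso

lemma powFinOrderIso_clsFin (e : α ≃ β) (s : Set α) :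
    powFinOrderIso e (clsFin s) = clsFin (e '' s) :=
  rfl

lemma cogenSet_finset_eq_Iic {B : Type*} [BooleanAlgebra B] (F : Finset B) :
    cogenSet (F : Set B) = Iic (F.sup id)ᶜ := by
  ext b
  simp [cogenSet, le_compl_iff_disjoint_right, disjoint_iff]

end PowFin

lemma finite_setOf_not_lt_of_graph_subset {a : Set (ℕ × ℕ)} {s : Set ℕ} {f g : ℕ → ℕ}
    (hg : ∀ m ∈ s, (m, g m) ∈ a) (ha : (a ∩ Lf f).Finite) : {m ∈ s | ¬ f m < g m}.Finite := by
  refine Finite.of_finite_image (f := fun m ↦ (m, g m)) (ha.subset ?_)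
    fun _ _ _ _ h ↦ congrArg Prod.fst h
  rintro _ ⟨m, ⟨hm, hfg⟩, rfl⟩
  exact ⟨hg m hm, not_lt.mp hfg⟩

lemma diff_Lf_finite_iff (f g : ℕ → ℕ) : (Lf f \ Lf g).Finite ↔ {m | g m < f m}.Finite := by
  constructor
  · intro h
    refine Finite.of_finite_image (f := fun m ↦ (m, f m)) (h.subset ?_)
      fun _ _ _ _ h ↦ congrArg Prod.fst h
    rintro _ ⟨m, hm, rfl⟩
    exact ⟨le_refl (f m), (not_le.mpr hm : ¬ f m ≤ g m)⟩
  · intro h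
    refine (h.biUnion fun m _ ↦ (finite_Iic (f m)).image (Prod.mk m)).subset ?_
    rintro ⟨m, n⟩ ⟨hf, hg⟩
    simp only [Lf, mem_ofPred_eq, not_le] at hf hg
    exact mem_biUnion (show g m < f m by omega) ⟨n, hf, rfl⟩

lemma clsFin_Lf_le_clsFin_Lf_iff (f g : ℕ → ℕ) :
    clsFin (Lf f) ≤ clsFin (Lf g) ↔ ∀ᶠ m in atTop, f m ≤ g m := by
  simp [clsFin_le_clsFin_iff, diff_Lf_finite_iff, ← Nat.cofinite_eq_atTop, eventually_cofinite]

lemma clsFin_mem_LIdeal_iff (X : Set (ℕ × ℕ)) :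
    clsFin X ∈ LIdeal ↔ ∀ m, (X ∩ Prod.fst ⁻¹' {m}).Finite := by
  simp only [LIdeal, mem_ofPred_eq, clsFin_le_clsFin_iff]
  constructor
  · rintro ⟨f, hf⟩ m
    have hcol : (Lf f ∩ Prod.fst ⁻¹' {m}).Finite := by
      refine ((finite_Iic (f m)).image (Prod.mk m)).subset ?_
      rintro ⟨m', n⟩ ⟨hn, rfl⟩
      exact ⟨n, hn, rfl⟩
    refine (hf.union hcol).subset fun p ⟨hpX, hpm⟩ ↦ ?_
    by_cases hp : p ∈ Lf f
    exacts [Or.inr ⟨hp, hpm⟩, Or.inl ⟨hpX, hp⟩]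
  · intro h
    refine ⟨fun m ↦ sSup (Prod.mk m ⁻¹' X), ?_⟩
    convert finite_empty
    refine sdiff_eq_empty.mpr fun ⟨m, n⟩ hp ↦ (le_csSup ?_ hp : n ≤ _)
    refine ((h m).preimage (Prod.mk_right_injective m).injOn).bddAbove.mono fun k hk ↦ ?_
    exact ⟨hk, rfl⟩

lemma LIdeal_eq_cogenSet : LIdeal = cogenSet (range fun m ↦ clsFin (Prod.fst ⁻¹' {m})) := by
  ext x
  obtain ⟨X, rfl⟩ := clsFin_surjective x
  rw [clsFin_mem_LIdeal_iff, clsFin_mem_cogenSet_range_iff]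

lemma LIdeal_ne_Iic (b : PowFin (ℕ × ℕ)) : LIdeal ≠ Iic b := by
  intro h
  obtain ⟨f, hbf⟩ : b ∈ LIdeal := h ▸ mem_Iic.mpr le_rfl
  have hsucc : clsFin (Lf (f + 1)) ≤ b := (h ▸ ⟨f + 1, le_rfl⟩ : clsFin (Lf (f + 1)) ∈ Iic b)
  obtain ⟨m, hm⟩ := ((clsFin_Lf_le_clsFin_Lf_iff _ _).mp (hsucc.trans hbf)).exists
  simp at hm

lemma ctblyCogen_LIdeal : CtblyCogen LIdeal :=
  ⟨⟨_, countable_range _, LIdeal_eq_cogenSet⟩,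
    fun ⟨F, hF⟩ ↦ LIdeal_ne_Iic _ (hF.trans (cogenSet_finset_eq_Iic F))⟩

section Partition

variable {α : Type*}

lemma finite_inter_disjointed_iff (B : ℕ → Set α) (X : Set α) :
    (∀ n, (X ∩ disjointed B n).Finite) ↔ ∀ n, (X ∩ B n).Finite := by
  refine ⟨fun h n ↦ ?_, fun h n ↦ (h n).subset (inter_subset_inter_right X (disjointed_subset B n))⟩
  have hB : B n ⊆ ⋃ i ∈ Finset.Iic n, disjointed B i :=
    (biUnion_Iic_disjointed B n).symm ▸ le_partialSups B n
  refine ((Finset.Iic n).finite_toSet.biUnion fun i _ ↦ h i).subset ?_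
  rw [← inter_iUnion₂]
  exact inter_subset_inter_right X hB

lemma exists_eq_cogenSet_range_of_ctblyCogen {I : Set (PowFin α)} (hI : CtblyCogen I) :
    ∃ B : ℕ → Set α, I = cogenSet (range fun n ↦ clsFin (B n)) := by
  obtain ⟨⟨S, hS, rfl⟩, hnp⟩ := hI
  obtain rfl | hne := S.eq_empty_or_nonempty
  · exact (hnp ⟨∅, by simp⟩).elim
  obtain ⟨s, rfl⟩ := hS.exists_eq_range hne
  choose B hB using fun n ↦ clsFin_surjective (s n)
  exact ⟨B, by simp only [hB]⟩

lemma exists_pairwise_disjoint_infinite_of_ctblyCogen {I : Set (PowFin α)}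
    (hI : CtblyCogen I) :
    ∃ A : ℕ → Set α, Pairwise (Disjoint on A) ∧ (∀ n, (A n).Infinite) ∧
      ∀ X, clsFin X ∈ I ↔ ∀ n, (X ∩ A n).Finite := by
  classical
  obtain ⟨B, rfl⟩ := exists_eq_cogenSet_range_of_ctblyCogen hI
  set A := disjointed B
  set M := {n | (A n).Infinite}
  have hIM : ∀ X, clsFin X ∈ cogenSet (range fun n ↦ clsFin (B n)) ↔
      ∀ n ∈ M, (X ∩ A n).Finite := fun X ↦ by
    rw [clsFin_mem_cogenSet_range_iff, ← finite_inter_disjointed_iff]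
    refine forall_congr' fun n ↦ ⟨fun h _ ↦ h, fun h ↦ ?_⟩
    by_cases hn : n ∈ M
    exacts [h hn, (not_infinite.mp hn).subset inter_subset_right]
  have hM : M.Infinite := by
    refine fun hM ↦ hI.2 ⟨hM.toFinset.image fun n ↦ clsFin (A n), ext fun x ↦ ?_⟩
    obtain ⟨X, rfl⟩ := clsFin_surjective x
    rw [hIM, Finset.coe_image, Finite.coe_toFinset, clsFin_mem_cogenSet_image_iff]
  have := hM.to_subtype
  obtain ⟨φ⟩ : Nonempty (ℕ ≃ M) := nonempty_equiv_of_countable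
  refine ⟨fun k ↦ A (φ k), (disjoint_disjointed B).comp_of_injective
    (Subtype.val_injective.comp φ.injective), fun k ↦ (φ k).2, fun X ↦ ?_⟩
  rw [hIM]
  exact ((φ.forall_congr_right (q := fun n : M ↦ (X ∩ A n).Finite)).trans Subtype.forall).symm

lemma exists_subset_preimage_singleton_subset_insert {A : ℕ → Set ℕ}
    (hA : Pairwise (Disjoint on A)) :
    ∃ π : ℕ → ℕ, ∀ n, A n ⊆ π ⁻¹' {n} ∧ π ⁻¹' {n} ⊆ insert n (A n) := by
  classical
  -- points outside every `A n` are fixed, so each fibre gains at most one point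
  refine ⟨fun x ↦ if h : ∃ n, x ∈ A n then h.choose else x,
    fun n ↦ ⟨fun x hx ↦ ?_, fun x hx ↦ ?_⟩⟩
  · have h : ∃ n, x ∈ A n := ⟨n, hx⟩
    simp only [mem_preimage, mem_singleton_iff, dif_pos h]
    by_contra hne
    exact disjoint_left.mp (hA hne) h.choose_spec hx
  · simp only [mem_preimage, mem_singleton_iff] at hx
    split_ifs at hx with h
    · exact Or.inr (hx ▸ h.choose_spec)
    · exact Or.inl hx

lemma exists_equiv_comp_eq_of_infinite_fibers {β γ : Type*} [Countable α] [Countable β]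
    {π : α → γ} {ρ : β → γ} (hπ : ∀ c, (π ⁻¹' {c}).Infinite) (hρ : ∀ c, (ρ ⁻¹' {c}).Infinite) :
    ∃ e : α ≃ β, ∀ a, ρ (e a) = π a := by
  have (c : γ) : Nonempty ({a // π a = c} ≃ {b // ρ b = c}) := by
    have : Infinite {a // π a = c} := (hπ c).to_subtype
    have : Infinite {b // ρ b = c} := (hρ c).to_subtype
    exact nonempty_equiv_of_countable
  exact ⟨Equiv.ofFiberEquiv fun c ↦ (this c).some, Equiv.ofFiberEquiv_map _⟩

end Partition

lemma nonempty_orderIso_LIdeal_of_ctblyCogen {I : Set (PowFin ℕ)} (hI : CtblyCogen I) :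
    Nonempty (I ≃o LIdeal) := by
  obtain ⟨A, hdisj, hinf, hIA⟩ := exists_pairwise_disjoint_infinite_of_ctblyCogen hI
  obtain ⟨π, hπ⟩ := exists_subset_preimage_singleton_subset_insert hdisj
  have hfin (X : Set ℕ) (n : ℕ) : (X ∩ π ⁻¹' {n}).Finite ↔ (X ∩ A n).Finite :=
    ⟨fun h ↦ h.subset (inter_subset_inter_right X (hπ n).1),
      fun h ↦ (h.insert n).subset fun _ ⟨hX, hx⟩ ↦ ((hπ n).2 hx).imp id (⟨hX, ·⟩)⟩
  obtain ⟨e, he⟩ := exists_equiv_comp_eq_of_infinite_fibers (ρ := Prod.fst)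
    (fun n ↦ (hinf n).mono (hπ n).1)
    fun m ↦ infinite_of_injective_forall_mem (Prod.mk_right_injective (β := ℕ) m) fun _ ↦ rfl
  have himage (X : Set ℕ) (m : ℕ) : e '' X ∩ Prod.fst ⁻¹' {m} = e '' (X ∩ π ⁻¹' {m}) := by
    rw [image_inter e.injective, e.image_eq_preimage_symm (π ⁻¹' {m}), ← preimage_comp]
    congr! 2
    ext p
    simp [← he]
  refine ⟨{ (powFinOrderIso e).toEquiv.subtypeEquiv fun x ↦ ?_ with
    map_rel_iff' := (powFinOrderIso e).le_iff_le }⟩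
  obtain ⟨X, rfl⟩ := clsFin_surjective x
  change _ ↔ powFinOrderIso e (clsFin X) ∈ LIdeal
  simp only [hIA, powFinOrderIso_clsFin, clsFin_mem_LIdeal_iff, himage,
    finite_image_iff e.injective.injOn, hfin]

lemma sInf_card_cofinal_eq_cof {α : Type*} [Preorder α] (I : Set α) :
    sInf {κ | ∃ C : Set α, C ⊆ I ∧ #C = κ ∧ ∀ x ∈ I, ∃ c ∈ C, x ≤ c} = Order.cof I := by
  apply le_antisymm
  · refine Order.le_cof_iff.mpr fun s hs ↦ csInf_le' ⟨Subtype.val '' s,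
      image_subset_iff.mpr fun x _ ↦ x.2, mk_image_eq Subtype.val_injective, fun x hx ↦ ?_⟩
    obtain ⟨c, hc, hxc⟩ := hs ⟨x, hx⟩
    exact ⟨c, mem_image_of_mem _ hc, hxc⟩
  · refine le_csInf ⟨_, I, subset_rfl, rfl, fun x hx ↦ ⟨x, hx, le_rfl⟩⟩ ?_
    rintro _ ⟨C, hCI, rfl, hC⟩
    refine (Order.cof_le (s := Subtype.val ⁻¹' C) fun ⟨x, hx⟩ ↦ ?_).trans_eq
      (mk_preimage_of_injective_of_subset_range _ _ Subtype.val_injective (by simpa))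
    obtain ⟨c, hc, hxc⟩ := hC x hx
    exact ⟨⟨c, hCI hc⟩, hc, hxc⟩

lemma dNum_eq_cof_LIdeal : dNum = Order.cof LIdeal := by
  apply le_antisymm
  · refine Order.le_cof_iff.mpr fun s hs ↦ ?_
    choose F hF using fun c : s ↦ c.1.2
    have hdom (g : ℕ → ℕ) : ∃ d ∈ range fun c ↦ F c + 1, ∀ᶠ n in atTop, g n < d n := by
      obtain ⟨c, hc, hgc⟩ := hs ⟨clsFin (Lf g), g, le_rfl⟩
      refine ⟨_, ⟨⟨c, hc⟩, rfl⟩, ?_⟩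
      exact ((clsFin_Lf_le_clsFin_Lf_iff _ _).mp (le_trans hgc (hF ⟨c, hc⟩))).mono
        fun _ ↦ Nat.lt_succ_of_le
    calc dNum ≤ #(range fun c ↦ F c + 1) := csInf_le' ⟨_, rfl, hdom⟩
      _ ≤ #s := mk_range_le
  · obtain ⟨D, hD, hdom⟩ : dNum ∈ {κ | ∃ D : Set (ℕ → ℕ), #D = κ ∧
        ∀ g : ℕ → ℕ, ∃ d ∈ D, ∀ᶠ n in atTop, g n < d n} :=
      csInf_mem ⟨_, univ, rfl, fun g ↦ ⟨g + 1, trivial, .of_forall fun _ ↦ Nat.lt_succ_self _⟩⟩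
    let L (d : D) : LIdeal := ⟨clsFin (Lf d), d, le_rfl⟩
    refine (Order.cof_le (s := range L) ?_).trans (mk_range_le.trans hD.le)
    rintro ⟨x, f, hxf⟩
    obtain ⟨d, hd, hfd⟩ := hdom f
    refine ⟨_, ⟨⟨d, hd⟩, rfl⟩, hxf.trans ?_⟩
    exact (clsFin_Lf_le_clsFin_Lf_iff _ _).mpr (hfd.mono fun _ ↦ le_of_lt)

/-- (1) For `a ⊆ ω×ω`, if `g` is a function whose graph is contained in `a` (defined on
`dom a = {m : ∃ n, (m,n) ∈ a}`) and `a ∩ L_f` is finite, then `g(m) > f(m)` for all but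
finitely many `m ∈ dom a`.
(2) The ideal `LIdeal` generated by the `L_f` is countably co-generated and
nonprincipal, and every countably co-generated nonprincipal ideal of `P(ω)/fin` is
order-isomorphic to it.
(3) `𝔡` equals the minimum cardinality of a cofinal subset of any countably
co-generated nonprincipal ideal of `P(ω)/fin`. -/
theorem Lf_characterization_and_d :
    (∀ (f : ℕ → ℕ) (a : Set (ℕ × ℕ)) (g : ℕ → ℕ),
      (∀ m ∈ {m | ∃ n, (m, n) ∈ a}, (m, g m) ∈ a) → (a ∩ Lf f).Finite →
      {m ∈ {m | ∃ n, (m, n) ∈ a} | ¬ f m < g m}.Finite) ∧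
    (CtblyCogen LIdeal ∧
      ∀ I : Set (PowFin ℕ), CtblyCogen I → Nonempty ((↥I) ≃o (↥LIdeal))) ∧
    (∀ I : Set (PowFin ℕ), CtblyCogen I →
      dNum = sInf {κ | ∃ C : Set (PowFin ℕ), C ⊆ I ∧ Cardinal.mk C = κ ∧
        ∀ x ∈ I, ∃ c ∈ C, x ≤ c}) := by
  refine ⟨fun f a g ↦ finite_setOf_not_lt_of_graph_subset,
    ⟨ctblyCogen_LIdeal, fun I ↦ nonempty_orderIso_LIdeal_of_ctblyCogen⟩, fun I hI ↦ ?_⟩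
  obtain ⟨e⟩ := nonempty_orderIso_LIdeal_of_ctblyCogen hI
  rw [sInf_card_cofinal_eq_cof, e.cof_congr, dNum_eq_cof_LIdeal]
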